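/- arXiv:math/0310130 — 5 statements merged into one kernel-verified Lean document; each statement's English description precedes it below -/
import Mathlib

section
/- Graded Nakayama lemma: let the grading on P given by W be weakly positive, i.e. assume there exists a ∈ ℤ^m such that every entry of aᵀ·W is strictly positive. Fix shifts δ_1,…,δ_r ∈ ℤ^m and let M ⊆ P^r be a finitely generated graded submodule, i.e. M is generated by finitely many homogeneous vectors. Let v_1,…,v_s ∈ M be homogeneous vectors and let 𝔪 = (x_1,…,x_n) be the ideal generated by the variables. Then v_1,…,v_s generate M as a P-module if and only if M ⊆ Span_P(v_1,…,v_s) + 𝔪·M (equivalently, if and only if the residue classes of v_1,…,v_s generate the K-vector space M/𝔪M). -/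
/-!
Fix a functional `φ : ℤ^m → ℤ` (here `d ↦ a ⬝ᵥ d`) that is positive on the degrees of all
variables. Since `M` and `Span(v)` are generated by homogeneous vectors, they contain the
homogeneous components of their elements, and the components of `M` vanish in every degree `d`
with `φ d` below the `φ`-degrees of all generators. Induct on `φ d`: write `u ∈ M` as `y + z` with
`y ∈ Span(v)` and `z ∈ 𝔪 • M`. The degree-`d` component of `y` lies in `Span(v)`, and that of `z`
is a combination of `X j` times degree-`(d - w j)` components of elements of `M`, whose `φ`-degree
is strictly smaller.
-/

open MvPolynomial

/-- The `W`-degree of an exponent vector `α ∈ ℕ^n`: `W·α = ∑ⱼ αⱼ w⁽ʲ⁾ ∈ ℤ^m`. -/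
def wdeg {m n : ℕ} (W : Matrix (Fin m) (Fin n) ℤ) (α : Fin n →₀ ℕ) : Fin m → ℤ :=
  fun i => ∑ j, (α j : ℤ) * W i j

/-- A polynomial is `W`-homogeneous of degree `d ∈ ℤ^m` if every monomial in its support
has `W`-degree `d`. -/
def IsWHomogeneous {K : Type*} [CommSemiring K] {m n : ℕ} (W : Matrix (Fin m) (Fin n) ℤ)
    (p : MvPolynomial (Fin n) K) (d : Fin m → ℤ) : Prop :=
  ∀ α ∈ p.support, wdeg W α = d

/-- A vector `v ∈ P^r` is homogeneous of degree `d ∈ ℤ^m` (with respect to the shifts `δ`)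
if each component `v i` is `W`-homogeneous of degree `d - δ i`. -/
def IsWHomogeneousVec {K : Type*} [CommSemiring K] {m n r : ℕ} (W : Matrix (Fin m) (Fin n) ℤ)
    (δ : Fin r → Fin m → ℤ) (v : Fin r → MvPolynomial (Fin n) K) (d : Fin m → ℤ) : Prop :=
  ∀ i : Fin r, ∀ α ∈ (v i).support, wdeg W α = d - δ i

section WeightedHomogeneousComponent

variable {σ R M : Type*} [CommSemiring R]

theorem weightedHomogeneousComponent_mul_of_isWeightedHomogeneous [AddCancelCommMonoid M]
    {w : σ → M} {q : MvPolynomial σ R} {j : M} (hq : q.IsWeightedHomogeneous w j)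
    (p : MvPolynomial σ R) (i : M) :
    weightedHomogeneousComponent w (i + j) (p * q) = weightedHomogeneousComponent w i p * q := by
  classical
  let := weightedGradedAlgebra R w
  simpa only [DirectSum.decompose, Equiv.coe_fn_mk, weightedDecomposition.decompose'_apply]
    using DirectSum.coe_decompose_mul_add_of_right_mem (weightedHomogeneousSubmodule R w)
      (a := p) (i := i) hq

theorem weightedHomogeneousComponent_eq_zero_of_neg [AddCommMonoid M] {w : σ → M}
    (φ : M →+ ℤ) (hφ : ∀ j, 0 ≤ φ (w j)) {d : M} (hd : φ d < 0) (p : MvPolynomial σ R) :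
    weightedHomogeneousComponent w d p = 0 := by
  refine weightedHomogeneousComponent_eq_zero' d p fun α _ hα => hd.not_ge ?_
  rw [← hα, Finsupp.weight_apply, map_finsuppSum]
  exact Finsupp.sum_nonneg fun j _ => by simpa only [map_nsmul] using nsmul_nonneg (hφ j) _

end WeightedHomogeneousComponent

section VecComponent

variable {σ ι R M : Type*} [CommSemiring R] [AddCommGroup M] (w : σ → M) (δ : ι → M)

def IsWeightedHomogeneousVec (v : ι → MvPolynomial σ R) (d : M) : Prop :=
  ∀ i, (v i).IsWeightedHomogeneous w (d - δ i)

noncomputable def vecComponent (d : M) :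
    (ι → MvPolynomial σ R) →ₗ[R] (ι → MvPolynomial σ R) :=
  LinearMap.pi fun i => (weightedHomogeneousComponent w (d - δ i)).comp (LinearMap.proj i)

variable {w δ}

@[simp]
theorem vecComponent_apply (d : M) (v : ι → MvPolynomial σ R) (i : ι) :
    vecComponent w δ d v i = weightedHomogeneousComponent w (d - δ i) (v i) :=
  rfl

theorem IsWeightedHomogeneousVec.vecComponent_same {v : ι → MvPolynomial σ R} {d : M}
    (hv : IsWeightedHomogeneousVec w δ v d) : vecComponent w δ d v = v :=
  funext fun i => weightedHomogeneousComponent_eq_self (hv i)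

theorem IsWeightedHomogeneousVec.vecComponent_smul {v : ι → MvPolynomial σ R} {e : M}
    (hv : IsWeightedHomogeneousVec w δ v e) (p : MvPolynomial σ R) (d : M) :
    vecComponent w δ d (p • v) = weightedHomogeneousComponent w (d - e) p • v := by
  funext i
  simpa only [vecComponent_apply, Pi.smul_apply, smul_eq_mul, sub_add_sub_cancel]
    using weightedHomogeneousComponent_mul_of_isWeightedHomogeneous (hv i) p (d - e)

theorem vecComponent_X_smul (j : σ) (v : ι → MvPolynomial σ R) (d : M) :
    vecComponent w δ d ((X j : MvPolynomial σ R) • v) =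
      (X j : MvPolynomial σ R) • vecComponent w δ (d - w j) v := by
  funext i
  have h := weightedHomogeneousComponent_mul_of_isWeightedHomogeneous
    (isWeightedHomogeneous_X R w j) (v i) (d - δ i - w j)
  rw [sub_add_cancel] at h
  simp only [vecComponent_apply, Pi.smul_apply, smul_eq_mul, mul_comm (X j : MvPolynomial σ R), h,
    sub_right_comm d (w j)]

variable {κ : Type*} {g : κ → ι → MvPolynomial σ R} {dg : κ → M}

theorem vecComponent_mem_span (hg : ∀ k, IsWeightedHomogeneousVec w δ (g k) (dg k))
    {x : ι → MvPolynomial σ R} (hx : x ∈ Submodule.span (MvPolynomial σ R) (Set.range g))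
    (d : M) : vecComponent w δ d x ∈ Submodule.span (MvPolynomial σ R) (Set.range g) := by
  obtain ⟨c, rfl⟩ := Finsupp.mem_span_range_iff_exists_finsupp.mp hx
  rw [map_finsuppSum]
  refine Submodule.finsuppSum_mem _ _ _ _ fun k _ => ?_
  rw [(hg k).vecComponent_smul]
  exact Submodule.smul_mem _ _ (Submodule.subset_span (Set.mem_range_self k))

theorem vecComponent_eq_zero_of_lt (φ : M →+ ℤ) (hφ : ∀ j, 0 ≤ φ (w j))
    (hg : ∀ k, IsWeightedHomogeneousVec w δ (g k) (dg k))
    {x : ι → MvPolynomial σ R} (hx : x ∈ Submodule.span (MvPolynomial σ R) (Set.range g))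
    {d : M} (hd : ∀ k, φ d < φ (dg k)) : vecComponent w δ d x = 0 := by
  obtain ⟨c, rfl⟩ := Finsupp.mem_span_range_iff_exists_finsupp.mp hx
  rw [map_finsuppSum]
  refine Finset.sum_eq_zero fun k _ => ?_
  dsimp only
  rw [(hg k).vecComponent_smul, weightedHomogeneousComponent_eq_zero_of_neg φ hφ, zero_smul]
  simpa only [map_sub, sub_neg] using hd k

theorem vecComponent_mem_of_mem_ideal_smul
    {N L : Submodule (MvPolynomial σ R) (ι → MvPolynomial σ R)} {d : M}
    (hN : ∀ j, ∀ x ∈ N, vecComponent w δ (d - w j) x ∈ L) {z : ι → MvPolynomial σ R}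
    (hz : z ∈ Ideal.span (Set.range (X : σ → MvPolynomial σ R)) • N) :
    vecComponent w δ d z ∈ L := by
  refine Submodule.smul_induction_on hz (fun p hp x hx => ?_)
    fun x y hx hy => by simpa only [map_add] using L.add_mem hx hy
  induction hp using Submodule.span_induction generalizing x with
  | mem _ hp =>
    obtain ⟨j, rfl⟩ := hp
    rw [vecComponent_X_smul]
    exact L.smul_mem _ (hN j x hx)
  | zero => simp
  | add p q _ _ hp hq => simpa only [add_smul, map_add] using L.add_mem (hp x hx) (hq x hx)
  | smul a p _ hp => simpa only [smul_eq_mul, mul_comm a, mul_smul] using hp _ (N.smul_mem a hx)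

end VecComponent

theorem span_le_span_of_le_sup_ideal_smul {σ ι κ τ R M : Type*} [CommSemiring R]
    [AddCommGroup M] [Finite κ] {w : σ → M} {δ : ι → M} (φ : M →+ ℤ) (hφ : ∀ j, 0 < φ (w j))
    {g : κ → ι → MvPolynomial σ R} {dg : κ → M}
    (hg : ∀ k, IsWeightedHomogeneousVec w δ (g k) (dg k))
    {v : τ → ι → MvPolynomial σ R} {dv : τ → M}
    (hv : ∀ k, IsWeightedHomogeneousVec w δ (v k) (dv k))
    (h : Submodule.span (MvPolynomial σ R) (Set.range g) ≤
      Submodule.span (MvPolynomial σ R) (Set.range v) ⊔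
        Ideal.span (Set.range (X : σ → MvPolynomial σ R)) •
          Submodule.span (MvPolynomial σ R) (Set.range g)) :
    Submodule.span (MvPolynomial σ R) (Set.range g) ≤
      Submodule.span (MvPolynomial σ R) (Set.range v) := by
  set N := Submodule.span (MvPolynomial σ R) (Set.range g)
  set L := Submodule.span (MvPolynomial σ R) (Set.range v)
  obtain ⟨B, hB⟩ := (Set.finite_range (φ ∘ dg)).bddBelow
  have hB' : ∀ k, B ≤ φ (dg k) := fun k => hB (Set.mem_range_self k)
  have key : ∀ b, B - 1 ≤ b → ∀ d, φ d ≤ b → ∀ x ∈ N, vecComponent w δ d x ∈ L := by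
    intro b hb
    induction b, hb using Int.leInduction with
    | base =>
      intro d hd x hx
      rw [vecComponent_eq_zero_of_lt φ (fun j => (hφ j).le) hg hx fun k => ?_]
      · exact L.zero_mem
      · linarith [hB' k]
    | succ b _ ih =>
      intro d hd x hx
      obtain ⟨y, hy, z, hz, rfl⟩ := Submodule.mem_sup.mp (h hx)
      rw [map_add]
      refine L.add_mem (vecComponent_mem_span hv hy d)
        (vecComponent_mem_of_mem_ideal_smul (fun j x hx => ih _ ?_ x hx) hz)
      rw [map_sub]
      linarith [hφ j]
  refine Submodule.span_le.mpr (Set.range_subset_iff.mpr fun k => ?_)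
  rw [← (hg k).vecComponent_same]
  exact key _ (by linarith [hB' k]) _ le_rfl _
    (Submodule.subset_span (Set.mem_range_self k))

theorem wdeg_eq_weight {m n : ℕ} (W : Matrix (Fin m) (Fin n) ℤ) (α : Fin n →₀ ℕ) :
    wdeg W α = Finsupp.weight (fun j i => W i j) α := by
  ext i
  rw [Finsupp.weight_eq_sum, Finset.sum_apply]
  simp [wdeg, mul_comm]

theorem IsWHomogeneousVec.isWeightedHomogeneousVec {K : Type*} [CommSemiring K] {m n r : ℕ}
    {W : Matrix (Fin m) (Fin n) ℤ} {δ : Fin r → Fin m → ℤ} {v : Fin r → MvPolynomial (Fin n) K}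
    {d : Fin m → ℤ} (hv : IsWHomogeneousVec W δ v d) :
    IsWeightedHomogeneousVec (fun j i => W i j) δ v d :=
  fun i α hα => wdeg_eq_weight W α ▸ hv i α (mem_support_iff.mpr hα)

/-- Graded Nakayama lemma: for a weakly positive grading, homogeneous vectors `v_1,…,v_s`
of a finitely generated graded submodule `M ⊆ P^r` generate `M` if and only if
`M ⊆ Span_P(v_1,…,v_s) + 𝔪·M`, where `𝔪 = (x_1,…,x_n)`. -/
theorem stmt_2 {K : Type*} [Field K] {m n r : ℕ} (W : Matrix (Fin m) (Fin n) ℤ)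
    (hW : ∃ a : Fin m → ℤ, ∀ j : Fin n, 0 < ∑ i, a i * W i j)
    (δ : Fin r → Fin m → ℤ)
    (M : Submodule (MvPolynomial (Fin n) K) (Fin r → MvPolynomial (Fin n) K))
    (hM : ∃ (t : ℕ) (g : Fin t → (Fin r → MvPolynomial (Fin n) K)) (dg : Fin t → Fin m → ℤ),
      (∀ k, IsWHomogeneousVec W δ (g k) (dg k)) ∧
      Submodule.span (MvPolynomial (Fin n) K) (Set.range g) = M)
    {s : ℕ} (v : Fin s → (Fin r → MvPolynomial (Fin n) K)) (dv : Fin s → Fin m → ℤ)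
    (hv : ∀ k, IsWHomogeneousVec W δ (v k) (dv k)) (hvM : ∀ k, v k ∈ M) :
    Submodule.span (MvPolynomial (Fin n) K) (Set.range v) = M ↔
      M ≤ Submodule.span (MvPolynomial (Fin n) K) (Set.range v) ⊔
        (Ideal.span (Set.range (X : Fin n → MvPolynomial (Fin n) K))) • M := by
  obtain ⟨a, ha⟩ := hW
  obtain ⟨t, g, dg, hg, rfl⟩ := hM
  refine ⟨fun h => h ▸ le_sup_left, fun h => le_antisymm ?_ ?_⟩
  · exact Submodule.span_le.mpr (Set.range_subset_iff.mpr hvM)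
  · exact span_le_span_of_le_sup_ideal_smul (AddMonoidHom.mk' (dotProduct a) (dotProduct_add a))
      ha (fun k => (hg k).isWeightedHomogeneousVec) (fun k => (hv k).isWeightedHomogeneousVec) h
end

section
/- Let W be an m×n integer matrix whose rows are ℤ-linearly independent and none of whose columns is zero, and let Γ ⊆ ℤ^m be the additive submonoid generated by the columns of W (that is, Γ = {W·α : α ∈ ℕ^n}, the set of degrees d with P_{W,d} ≠ 0). Then the restriction of the lexicographic order Lex to Γ is a well-ordering (every nonempty subset of Γ has a Lex-least element) if and only if every nonzero element d ∈ Γ satisfies 0 <_Lex d. -/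
open MvPolynomial

/-!
Γ is the image of the monoid hom `α ↦ W·α` from `ℕ^n` to `(ℤ^m, Lex)`. If some `d ∈ Γ` is
negative, the multiples `d > 2d > 3d > ⋯` in `Γ` have no least element. Conversely, if
`Γ ≥ 0` then `α ↦ W·α` is monotone for the componentwise order on `ℕ^n`, which is a
well-quasi-order by Dickson's lemma, so every subset of `Γ` is partially well-ordered.
-/

section OrderedImage

variable {M α : Type*} [AddCommMonoid M] [AddCommMonoid α] [LinearOrder α]
  [IsOrderedCancelAddMonoid α]

theorem nonneg_of_forall_exists_le (f : M →+ α)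
    (h : ∀ S ⊆ Set.range f, S.Nonempty → ∃ d ∈ S, ∀ d' ∈ S, d ≤ d') {a : α}
    (ha : a ∈ Set.range f) : 0 ≤ a := by
  obtain ⟨x, rfl⟩ := ha
  obtain ⟨_, ⟨k, rfl⟩, hmin⟩ := h (Set.range fun k : ℕ => k • f x)
    (by rintro _ ⟨k, rfl⟩; exact ⟨k • x, map_nsmul f k x⟩) (Set.range_nonempty _)
  have hle : k • f x ≤ k • f x + f x := succ_nsmul (f x) k ▸ hmin _ ⟨k + 1, rfl⟩
  exact le_add_iff_nonneg_right _ |>.mp hle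

variable [PartialOrder M] [CanonicallyOrderedAdd M]

theorem AddMonoidHom.monotone_of_nonneg (f : M →+ α) (hf : ∀ x, 0 ≤ f x) : Monotone f := by
  intro x y hxy
  obtain ⟨z, rfl⟩ := exists_add_of_le hxy
  simpa using add_le_add_left (hf z) (f x)

theorem exists_forall_le_of_nonneg [WellQuasiOrderedLE M] (f : M →+ α) (hf : ∀ x, 0 ≤ f x)
    {S : Set α} (hS : S ⊆ Set.range f) (hne : S.Nonempty) : ∃ d ∈ S, ∀ d' ∈ S, d ≤ d' := by
  have hwf : S.IsWF := by
    rw [← Set.image_preimage_eq_of_subset hS]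
    exact ((Set.isPWO_of_wellQuasiOrderedLE _).image_of_monotone
      (f.monotone_of_nonneg hf)).isWF
  exact ⟨hwf.min hne, hwf.min_mem hne, fun _ => hwf.min_le hne⟩

theorem forall_exists_le_iff_nonneg [WellQuasiOrderedLE M] (f : M →+ α) :
    (∀ S ⊆ Set.range f, S.Nonempty → ∃ d ∈ S, ∀ d' ∈ S, d ≤ d') ↔
      ∀ d ∈ Set.range f, 0 ≤ d :=
  ⟨nonneg_of_forall_exists_le f, fun h _ hS hne =>
    exists_forall_le_of_nonneg f (fun x => h _ ⟨x, rfl⟩) hS hne⟩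

end OrderedImage

theorem wdeg_zero {m n : ℕ} (W : Matrix (Fin m) (Fin n) ℤ) : wdeg W 0 = 0 :=
  funext fun _ => by simp [wdeg]

theorem wdeg_add {m n : ℕ} (W : Matrix (Fin m) (Fin n) ℤ) (α β : Fin n →₀ ℕ) :
    wdeg W (α + β) = wdeg W α + wdeg W β :=
  funext fun _ => by simp [wdeg, add_mul, Finset.sum_add_distrib]

def wdegLexHom {m n : ℕ} (W : Matrix (Fin m) (Fin n) ℤ) : (Fin n →₀ ℕ) →+ Lex (Fin m → ℤ) where
  toFun α := toLex (wdeg W α)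
  map_zero' := congrArg toLex (wdeg_zero W)
  map_add' α β := congrArg toLex (wdeg_add W α β)

theorem stmt_4_general {m n : ℕ} (W : Matrix (Fin m) (Fin n) ℤ) :
    (∀ S : Set (Fin m → ℤ), S ⊆ Set.range (wdeg W) → S.Nonempty →
        ∃ d ∈ S, ∀ d' ∈ S, toLex d ≤ toLex d') ↔
      (∀ d ∈ Set.range (wdeg W), d ≠ 0 → toLex (0 : Fin m → ℤ) < toLex d) := by
  refine (forall_exists_le_iff_nonneg (wdegLexHom W)).trans (forall₂_congr fun d _ => ?_)
  rw [le_iff_lt_or_eq, or_iff_not_imp_right, eq_comm]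
  exact imp_congr_left (toLex.injective.ne_iff' rfl).symm

/-- Let `W` have `ℤ`-linearly independent rows and no zero column, and let
`Γ = {W·α : α ∈ ℕ^n} ⊆ ℤ^m` be the monoid of degrees in which `P` is nonzero.  Then the
restriction of `Lex` to `Γ` is a well-ordering (every nonempty subset of `Γ` has a
`Lex`-least element) if and only if every nonzero `d ∈ Γ` satisfies `0 <_Lex d`. -/
theorem stmt_4 {m n : ℕ} (W : Matrix (Fin m) (Fin n) ℤ)
    (hrows : LinearIndependent ℤ (fun i : Fin m => (fun j => W i j : Fin n → ℤ)))
    (hcols : ∀ j : Fin n, ∃ i : Fin m, W i j ≠ 0) :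
    (∀ S : Set (Fin m → ℤ), S ⊆ Set.range (wdeg W) → S.Nonempty →
        ∃ d ∈ S, ∀ d' ∈ S, toLex d ≤ toLex d') ↔
      (∀ d ∈ Set.range (wdeg W), d ≠ 0 → toLex (0 : Fin m → ℤ) < toLex d) :=
  stmt_4_general W
end

section
/- Every positive grading is weakly positive: if W is an m×n integer matrix such that no column of W is zero and the first non-zero entry of each column of W is positive, then there exist integers a_1,…,a_m such that the vector a_1 w_1 + ⋯ + a_m w_m (where w_1,…,w_m are the rows of W) has all n entries strictly positive. -/
/-- Every positive grading is weakly positive: if no column of `W` is zero and the first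
non-zero entry of each column of `W` is positive, then some integer combination
`a_1 w_1 + ⋯ + a_m w_m` of the rows of `W` has all `n` entries strictly positive. -/
theorem stmt_6 {m n : ℕ} (W : Matrix (Fin m) (Fin n) ℤ)
    (hcols : ∀ j : Fin n, ∃ i : Fin m, W i j ≠ 0)
    (hpos : ∀ j : Fin n, ∃ i : Fin m, 0 < W i j ∧ ∀ i' < i, W i' j = 0) :
    ∃ a : Fin m → ℤ, ∀ j : Fin n, 0 < ∑ i, a i * W i j := by
  classical
  set B : ℤ := ∑ i, ∑ j, |W i j| with hBdef
  have hB0 : 0 ≤ B := Finset.sum_nonneg fun i _ => Finset.sum_nonneg fun j _ => abs_nonneg _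
  have hbound : ∀ i j, |W i j| ≤ B := by
    intro i j
    calc |W i j| ≤ ∑ j', |W i j'| :=
          Finset.single_le_sum (f := fun j' => |W i j'|) (fun _ _ => abs_nonneg _)
            (Finset.mem_univ j)
      _ ≤ B := Finset.single_le_sum (f := fun i' => ∑ j', |W i' j'|)
            (fun _ _ => Finset.sum_nonneg fun _ _ => abs_nonneg _) (Finset.mem_univ i)
  set M : ℤ := m * B + 1 with hMdef
  have hM1 : 1 ≤ M := by
    have : (0:ℤ) ≤ m * B := mul_nonneg (by positivity) hB0
    linarith
  have hM0 : 0 < M := lt_of_lt_of_le one_pos hM1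
  refine ⟨fun i => M ^ (m - 1 - i.val), ?_⟩
  intro j
  obtain ⟨i0, h1, h2⟩ := hpos j
  set f : Fin m → ℤ := fun i => M ^ (m - 1 - i.val) * W i j with hfdef
  have hsplit : ∑ i, f i = f i0 + ∑ i ∈ Finset.univ.erase i0, f i :=
    (Finset.add_sum_erase _ f (Finset.mem_univ i0)).symm
  set T : Finset (Fin m) := Finset.univ.filter (fun i => i0 < i) with hTdef
  have hTsub : T ⊆ Finset.univ.erase i0 := by
    intro i hi
    simp only [hTdef, Finset.mem_filter] at hi
    exact Finset.mem_erase.mpr ⟨hi.2.ne', Finset.mem_univ i⟩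
  have herase : ∑ i ∈ Finset.univ.erase i0, f i = ∑ i ∈ T, f i := by
    refine (Finset.sum_subset hTsub ?_).symm
    intro i hi hiT
    have hne : i ≠ i0 := (Finset.mem_erase.mp hi).1
    have : ¬ i0 < i := by simpa [hTdef] using hiT
    have hlt : i < i0 := lt_of_le_of_ne (not_lt.mp this) hne
    simp [hfdef, h2 i hlt]
  rw [hsplit, herase]
  -- bound each tail term
  rcases Nat.lt_or_ge (i0.val + 1) m with hcase | hcase
  · -- i0 is not the last row
    set k : ℕ := m - 2 - i0.val with hkdef
    have hek : m - 1 - i0.val = k + 1 := by omega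
    have htail : ∀ i ∈ T, -(B * M ^ k) ≤ f i := by
      intro i hi
      have hi0i : i0 < i := by simpa [hTdef] using hi
      have hle : m - 1 - i.val ≤ k := by
        have := hi0i
        have h' : i0.val < i.val := this
        omega
      have hpow : M ^ (m - 1 - i.val) ≤ M ^ k := pow_le_pow_right₀ hM1 hle
      have hpowpos : (0:ℤ) < M ^ (m - 1 - i.val) := pow_pos hM0 _
      have habs : |W i j| ≤ B := hbound i j
      have h1' : -B ≤ W i j := neg_le_of_abs_le habs
      have : -(M ^ (m - 1 - i.val) * B) ≤ M ^ (m - 1 - i.val) * W i j := by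
        rw [← mul_neg]
        exact mul_le_mul_of_nonneg_left h1' hpowpos.le
      refine le_trans ?_ this
      have : M ^ (m - 1 - i.val) * B ≤ M ^ k * B :=
        mul_le_mul_of_nonneg_right hpow hB0
      linarith [this]
    have hsum : -(T.card : ℤ) * (B * M ^ k) ≤ ∑ i ∈ T, f i := by
      have := Finset.sum_le_sum htail
      calc -(T.card : ℤ) * (B * M ^ k) = ∑ _i ∈ T, -(B * M ^ k) := by
            rw [Finset.sum_const, nsmul_eq_mul]; ring
        _ ≤ ∑ i ∈ T, f i := this
    have hcard : (T.card : ℤ) ≤ m := by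
      have := Finset.card_le_univ T
      simp only [Finset.card_univ, Fintype.card_fin] at this
      exact_mod_cast this
    have hBMk : (0:ℤ) ≤ B * M ^ k := mul_nonneg hB0 (pow_pos hM0 k).le
    have hsum' : -(m : ℤ) * (B * M ^ k) ≤ ∑ i ∈ T, f i := by
      refine le_trans ?_ hsum
      have : -(m:ℤ) * (B * M ^ k) ≤ -(T.card : ℤ) * (B * M ^ k) := by
        apply mul_le_mul_of_nonneg_right _ hBMk
        linarith
      exact this
    have hfi0 : M ^ (k+1) ≤ f i0 := by
      have : (0:ℤ) < M ^ (k+1) := pow_pos hM0 _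
      calc M ^ (k+1) = M ^ (k+1) * 1 := (mul_one _).symm
        _ ≤ M ^ (k+1) * W i0 j := mul_le_mul_of_nonneg_left h1 this.le
        _ = f i0 := by rw [hfdef]; simp [hek]
    have hMk : (0:ℤ) < M ^ k := pow_pos hM0 k
    have hexp : M ^ (k+1) = (m * B + 1) * M ^ k := by rw [pow_succ]; ring
    nlinarith [hsum', hfi0, hMk]
  · -- i0 is the last row: tail is empty
    have hTempty : T = ∅ := by
      refine Finset.eq_empty_of_forall_notMem fun i hi => ?_
      have hi0i : i0 < i := by simpa [hTdef] using hi
      have : i.val < m := i.isLt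
      have : i0.val < i.val := hi0i
      omega
    rw [hTempty]
    simp only [Finset.sum_empty, add_zero]
    exact mul_pos (pow_pos hM0 _) h1
end

section
/- Characterization of truncated Gröbner bases (Buchberger criterion for truncations): let the grading given by W be positive, let σ be a term ordering on ℕ^n, let g_1,…,g_s ∈ P be nonzero polynomials with g_k W-homogeneous of degree d_k ∈ ℤ^m, let I = (g_1,…,g_s) be the ideal they generate, and let D ∈ ℤ^m. For each k let t_k = deg_σ(g_k) and lc_k ∈ K∖{0} the coefficient of x^{t_k} in g_k; for i < j set L_ij = t_i ⊔ t_j (componentwise max) and S_ij = lc_i⁻¹ x^{L_ij − t_i} g_i − lc_j⁻¹ x^{L_ij − t_j} g_j. Then the following are equivalent: (b) for every nonzero W-homogeneous v ∈ I whose W-degree e satisfies e ≤_Lex D, there exists k with d_k ≤_Lex D such that t_k ≤ deg_σ(v) componentwise (i.e. the leading term of some g_k of degree at most D divides the leading term of v); (c) for all i < j with deg_W(x^{L_ij}) ≤_Lex D, the S-polynomial S_ij is zero or admits a representation S_ij = ∑_k q_k g_k in which q_k = 0 whenever d_k is not ≤_Lex D, and deg_σ(q_k g_k) ≤_σ deg_σ(S_ij)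 for every k with q_k g_k ≠ 0 (i.e. S_ij reduces to zero against {g_k : d_k ≤_Lex D}). -/
/-!
(b) ⇒ (c): an S-polynomial `S_ij` with `deg_W(x^{L_ij}) ≤ D` is a `W`-homogeneous element of `I`
of degree `≤ D`. Divide it by the `g_k` with `d_k ≤ D`: the homogeneous component of the remainder
in that degree lies in `I` but none of its terms is divisible by a leading term of such a `g_k`, so
it vanishes by (b), and the homogenized quotients form the required representation.

(c) ⇒ (b): write `v = ∑ q_k g_k` with `q_k` homogeneous of degree `e - d_k`, so that `d_k ≤ e ≤ D`
whenever `q_k ≠ 0` because the weights are nonnegative. Choose such a representation minimizing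
first `μ = max_σ deg_σ(q_k g_k)`, then the number of `k` for which `q_k g_k` has a nonzero
coefficient at `x^μ`. If `μ >_σ deg_σ(v)`, these coefficients cancel, so two indices `i < j`
contribute; then `t_i ⊔ t_j ≤ μ`, whence `deg_W(x^{L_ij}) ≤ deg_W(x^μ) = e ≤ D`, and a monomial
multiple of `S_ij - ∑ p_k g_k`, with `∑ p_k g_k` the representation given by (c), is a syzygy
that removes the contribution of `i` at `x^μ` without raising `μ`. This contradicts minimality,
so `μ = deg_σ(v)` and some `t_k` divides the leading monomial of `v`.
-/

open MvPolynomial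

/-- The grading given by `W` is positive: the rows of `W` are `ℤ`-linearly independent,
no column of `W` is zero, and the first non-zero entry of each column of `W` is positive. -/
def PositiveGrading {m n : ℕ} (W : Matrix (Fin m) (Fin n) ℤ) : Prop :=
  LinearIndependent ℤ (fun i : Fin m => (fun j => W i j : Fin n → ℤ)) ∧
  (∀ j : Fin n, ∃ i : Fin m, W i j ≠ 0) ∧
  (∀ j : Fin n, ∃ i : Fin m, 0 < W i j ∧ ∀ i' < i, W i' j = 0)

/-- The `σ`-degree (exponent of the `σ`-leading term) of a polynomial: the `σ`-largest
exponent vector in its support. -/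
noncomputable def mdeg {K : Type*} [CommSemiring K] {n : ℕ} (σ : MonomialOrder (Fin n))
    (f : MvPolynomial (Fin n) K) : Fin n →₀ ℕ :=
  σ.toSyn.symm (f.support.sup fun α => σ.toSyn α)

/-- The S-polynomial of `f` and `g` with respect to the term ordering `σ`:
`S = lc(f)⁻¹·x^(L−deg f)·f − lc(g)⁻¹·x^(L−deg g)·g` where `L = deg f ⊔ deg g`. -/
noncomputable def sPoly {K : Type*} [Field K] {n : ℕ} (σ : MonomialOrder (Fin n))
    (f g : MvPolynomial (Fin n) K) : MvPolynomial (Fin n) K :=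
  monomial ((mdeg σ f ⊔ mdeg σ g) - mdeg σ f) ((f.coeff (mdeg σ f))⁻¹) * f -
    monomial ((mdeg σ f ⊔ mdeg σ g) - mdeg σ g) ((g.coeff (mdeg σ g))⁻¹) * g

open MonomialOrder
open Finsupp (weight weight_apply)

section Weight

variable {ν M : Type*} [AddCommMonoid M] [PartialOrder M] [IsOrderedAddMonoid M] {w : ν → M}

theorem Finsupp.weight_nonneg_of_nonneg (hw : ∀ i, 0 ≤ w i) (α : ν →₀ ℕ) : 0 ≤ weight w α := by
  rw [weight_apply]
  exact Finset.sum_nonneg fun i _ => nsmul_nonneg (hw i) _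

theorem Finsupp.weight_mono_of_nonneg (hw : ∀ i, 0 ≤ w i) {α β : ν →₀ ℕ} (h : α ≤ β) :
    weight w α ≤ weight w β := by
  rw [← add_tsub_cancel_of_le h, map_add]
  exact le_add_of_nonneg_right (weight_nonneg_of_nonneg hw _)

end Weight

namespace MvPolynomial

section WeightedHomogeneous

variable {ν R M : Type*} [CommSemiring R] {w : ν → M}

theorem IsWeightedHomogeneous.nonneg [AddCommMonoid M] [PartialOrder M] [IsOrderedAddMonoid M]
    (hw : ∀ i, 0 ≤ w i) {p : MvPolynomial ν R} {c : M} (hp : IsWeightedHomogeneous w p c)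
    (hp0 : p ≠ 0) : 0 ≤ c := by
  obtain ⟨α, hα⟩ := exists_coeff_ne_zero hp0
  exact hp hα ▸ Finsupp.weight_nonneg_of_nonneg hw α

theorem weightedHomogeneousComponent_mul_of_isWeightedHomogeneous [AddCancelCommMonoid M]
    {g : MvPolynomial ν R} {d : M} (hg : IsWeightedHomogeneous w g d) (c : M)
    (p : MvPolynomial ν R) :
    weightedHomogeneousComponent w (c + d) (p * g) = weightedHomogeneousComponent w c p * g := by
  classical
  ext β
  have hterm : ∀ x ∈ Finset.HasAntidiagonal.antidiagonal β,
      coeff x.1 (weightedHomogeneousComponent w c p) * coeff x.2 g =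
        if weight w β = c + d then coeff x.1 p * coeff x.2 g else 0 := by
    rintro ⟨α, γ⟩ hαγ
    rw [Finset.HasAntidiagonal.mem_antidiagonal] at hαγ
    by_cases hγ : coeff γ g = 0
    · simp [hγ]
    rw [coeff_weightedHomogeneousComponent, ← hαγ, map_add, hg hγ, add_left_inj]
    split_ifs <;> simp
  rw [coeff_weightedHomogeneousComponent, coeff_mul, coeff_mul, Finset.sum_congr rfl hterm,
    Finset.sum_ite_irrel, Finset.sum_const_zero]

theorem weightedHomogeneousComponent_sum_mul [AddCommGroup M] {ι : Type*} [Fintype ι]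
    {g : ι → MvPolynomial ν R} {d : ι → M} (hg : ∀ k, IsWeightedHomogeneous w (g k) (d k))
    (e : M) (q : ι → MvPolynomial ν R) :
    weightedHomogeneousComponent w e (∑ k, q k * g k) =
      ∑ k, weightedHomogeneousComponent w (e - d k) (q k) * g k := by
  rw [map_sum]
  refine Finset.sum_congr rfl fun k _ => ?_
  rw [← weightedHomogeneousComponent_mul_of_isWeightedHomogeneous (hg k), sub_add_cancel]

theorem IsWeightedHomogeneous.eq_sum_weightedHomogeneousComponent_mul [AddCommGroup M]
    {ι : Type*} [Fintype ι] {g : ι → MvPolynomial ν R} {d : ι → M}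
    (hg : ∀ k, IsWeightedHomogeneous w (g k) (d k)) {v : MvPolynomial ν R} {e : M}
    (hv : IsWeightedHomogeneous w v e) {q : ι → MvPolynomial ν R} (hq : v = ∑ k, q k * g k) :
    v = ∑ k, weightedHomogeneousComponent w (e - d k) (q k) * g k := by
  rw [← weightedHomogeneousComponent_sum_mul hg, ← hq, hv.weightedHomogeneousComponent_same]

theorem support_weightedHomogeneousComponent_subset [AddCommMonoid M] (c : M)
    (p : MvPolynomial ν R) : (weightedHomogeneousComponent w c p).support ⊆ p.support := by
  classical
  rw [support_weightedHomogeneousComponent]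
  exact Finset.filter_subset _ _

theorem IsWeightedHomogeneous.weight_degree [AddCommMonoid M] {σ : MonomialOrder ν}
    {p : MvPolynomial ν R} {c : M} (hp : IsWeightedHomogeneous w p c) (hp0 : p ≠ 0) :
    weight w (σ.degree p) = c :=
  hp (σ.coeff_degree_ne_zero_iff.2 hp0)

theorem isWeightedHomogeneous_monomial_tsub_degree_mul [AddCommMonoid M] {σ : MonomialOrder ν}
    {p : MvPolynomial ν R} {dp : M} (hp : IsWeightedHomogeneous w p dp) (hp0 : p ≠ 0)
    {μ : ν →₀ ℕ} (hμ : σ.degree p ≤ μ) (c : R) :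
    IsWeightedHomogeneous w (monomial (μ - σ.degree p) c * p) (weight w μ) := by
  have h := (isWeightedHomogeneous_monomial w (μ - σ.degree p) c rfl).mul hp
  rwa [← hp.weight_degree hp0, ← map_add, tsub_add_cancel_of_le hμ] at h

theorem isWeightedHomogeneous_monomial_tsub_degree [AddCommGroup M] {σ : MonomialOrder ν}
    {p : MvPolynomial ν R} {dp : M} (hp : IsWeightedHomogeneous w p dp) (hp0 : p ≠ 0)
    {μ : ν →₀ ℕ} (hμ : σ.degree p ≤ μ) (c : R) :
    IsWeightedHomogeneous w (monomial (μ - σ.degree p) c) (weight w μ - dp) := by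
  refine isWeightedHomogeneous_monomial w _ _ (eq_sub_of_add_eq ?_)
  rw [← hp.weight_degree hp0, ← map_add, tsub_add_cancel_of_le hμ]

end WeightedHomogeneous

theorem isWeightedHomogeneous_sPolynomial {ν R M : Type*} [CommRing R] [AddCommMonoid M]
    {w : ν → M} {σ : MonomialOrder ν} {f g : MvPolynomial ν R} {df dg : M}
    (hf : IsWeightedHomogeneous w f df) (hg : IsWeightedHomogeneous w g dg)
    (hf0 : f ≠ 0) (hg0 : g ≠ 0) :
    IsWeightedHomogeneous w (σ.sPolynomial f g) (weight w (σ.degree f ⊔ σ.degree g)) := by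
  rw [sPolynomial_def]
  exact (isWeightedHomogeneous_monomial_tsub_degree_mul hf hf0 le_sup_left _).sub
    (isWeightedHomogeneous_monomial_tsub_degree_mul hg hg0 le_sup_right _)

theorem coeff_monomial_mul_of_le {ν R : Type*} [CommSemiring R] {μ t : ν →₀ ℕ} (h : t ≤ μ)
    (c : R) (f : MvPolynomial ν R) : (monomial (μ - t) c * f).coeff μ = c * f.coeff t := by
  rw [coeff_monomial_mul', if_pos tsub_le_self, tsub_tsub_cancel_of_le h]

end MvPolynomial

namespace MonomialOrder

section CommSemiring

variable {ν R : Type*} [CommSemiring R] {σ : MonomialOrder ν}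

theorem degree_mul_le_degree_mul_of_support_subset [NoZeroDivisors R]
    {p q : MvPolynomial ν R} (h : p.support ⊆ q.support) (g : MvPolynomial ν R) :
    σ.degree (p * g) ≼[σ] σ.degree (q * g) := by
  rcases eq_or_ne p 0 with rfl | hp
  · simp
  rcases eq_or_ne g 0 with rfl | hg
  · simp
  have hq : q ≠ 0 := by rintro rfl; simp_all
  rw [degree_mul hp hg, degree_mul hq hg, map_add, map_add]
  exact add_le_add (degree_le_degree_of_support_subset h) le_rfl

theorem degree_monomial_mul_le_of_le {x : MvPolynomial ν R} {L μ : ν →₀ ℕ}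
    (hx : σ.degree x ≼[σ] L) (hμ : L ≤ μ) (c : R) :
    σ.degree (monomial (μ - L) c * x) ≼[σ] μ :=
  calc σ.toSyn (σ.degree (monomial (μ - L) c * x)) ≤ σ.toSyn (μ - L) + σ.toSyn L :=
        degree_mul_le.trans (by rw [map_add]; exact add_le_add (degree_monomial_le c) hx)
    _ = σ.toSyn μ := by rw [← map_add, tsub_add_cancel_of_le hμ]

theorem degree_monomial_mul [NoZeroDivisors R] {a : ν →₀ ℕ} {c : R} (hc : c ≠ 0)
    {f : MvPolynomial ν R} (hf : f ≠ 0) : σ.degree (monomial a c * f) = a + σ.degree f := by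
  classical
  rw [degree_mul (by simpa using hc) hf, degree_monomial, if_neg hc]

theorem degree_eq_of_coeff_ne_zero {f : MvPolynomial ν R} {μ : ν →₀ ℕ} (h : f.coeff μ ≠ 0)
    (hle : σ.degree f ≼[σ] μ) : σ.degree f = μ :=
  σ.toSyn.injective (le_antisymm hle (le_degree (MvPolynomial.mem_support_iff.2 h)))

theorem ne_zero_and_degree_le_of_coeff_mul_ne_zero [NoZeroDivisors R] {q g : MvPolynomial ν R}
    {μ : ν →₀ ℕ} (hg : g ≠ 0) (h : (q * g).coeff μ ≠ 0) (hle : σ.degree (q * g) ≼[σ] μ) :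
    q ≠ 0 ∧ σ.degree g ≤ μ := by
  have hq : q ≠ 0 := by rintro rfl; simp at h
  refine ⟨hq, ?_⟩
  rw [← degree_eq_of_coeff_ne_zero h hle, degree_mul hq hg]
  exact le_add_self

end CommSemiring

theorem monomial_mul_sPolynomial {ν R : Type*} [CommRing R] {σ : MonomialOrder ν}
    {f g : MvPolynomial ν R} {μ : ν →₀ ℕ} (hμ : σ.degree f ⊔ σ.degree g ≤ μ) (c : R) :
    monomial (μ - σ.degree f ⊔ σ.degree g) c * σ.sPolynomial f g =
      monomial (μ - σ.degree f) (c * σ.leadingCoeff g) * f -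
        monomial (μ - σ.degree g) (c * σ.leadingCoeff f) * g := by
  rw [sPolynomial_def, mul_sub, ← mul_assoc, ← mul_assoc, monomial_mul, monomial_mul,
    tsub_add_tsub_cancel hμ le_sup_left, tsub_add_tsub_cancel hμ le_sup_right]

theorem exists_monomial_mul_sPolynomial_eq_sum {ν K ι : Type*} [Field K] [Fintype ι]
    {σ : MonomialOrder ν} {g : ι → MvPolynomial ν K} {i j : ι} (hi : g i ≠ 0) (hj : g j ≠ 0)
    (hij : i ≠ j) {μ : ν →₀ ℕ} (hμ : σ.degree (g i) ⊔ σ.degree (g j) ≤ μ) (a : K) :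
    ∃ (c : K) (B : ι → K),
      monomial (μ - σ.degree (g i) ⊔ σ.degree (g j)) c * σ.sPolynomial (g i) (g j) =
        ∑ k, monomial (μ - σ.degree (g k)) (B k) * g k ∧
      B i * σ.leadingCoeff (g i) = a ∧ (∀ k, k ≠ i → k ≠ j → B k = 0) ∧
      ∀ k, B k ≠ 0 → σ.degree (g k) ≤ μ := by
  classical
  have hi' := σ.leadingCoeff_ne_zero_iff.2 hi
  have hj' := σ.leadingCoeff_ne_zero_iff.2 hj
  set c := a / (σ.leadingCoeff (g i) * σ.leadingCoeff (g j))
  refine ⟨c, fun k => if k = i then c * σ.leadingCoeff (g j)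
    else if k = j then -(c * σ.leadingCoeff (g i)) else 0, ?_, ?_, fun k hki hkj => ?_, ?_⟩
  · rw [Fintype.sum_eq_add i j hij fun k hk => by simp [hk.1, hk.2], monomial_mul_sPolynomial hμ]
    simp [hij.symm, sub_eq_add_neg]
  · simp [c]
    field_simp
  · simp [hki, hkj]
  · intro k hk
    dsimp only at hk
    split_ifs at hk with h1 h2
    · exact h1 ▸ le_sup_left.trans hμ
    · exact h2 ▸ le_sup_right.trans hμ
    · exact absurd rfl hk

end MonomialOrder

section TruncatedGroebner

variable {ν K M ι : Type*} [Field K] [AddCommGroup M] [PartialOrder M]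
  {w : ν → M} {σ : MonomialOrder ν} [Fintype ι] {g : ι → MvPolynomial ν K} {d : ι → M} {D : M}
  {P : ι → Prop} {f : MvPolynomial ν K}

variable (σ g) in
def IsStandardRep (P : ι → Prop) (f : MvPolynomial ν K) (q : ι → MvPolynomial ν K) : Prop :=
  f = ∑ k, q k * g k ∧ (∀ k, ¬ P k → q k = 0) ∧ ∀ k, σ.degree (q k * g k) ≼[σ] σ.degree f

theorem IsStandardRep.smul {c : K} (hc : c ≠ 0) {q : ι → MvPolynomial ν K}
    (h : IsStandardRep σ g P f q) : IsStandardRep σ g P (c • f) (c • q) := by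
  obtain ⟨hfq, hP, hdeg⟩ := h
  refine ⟨by simp [hfq, Finset.smul_sum], fun k hk => by simp [hP k hk], fun k => ?_⟩
  simpa [smul_mul_assoc, degree_smul_of_isRegular (IsRegular.of_ne_zero hc)] using hdeg k

theorem exists_isStandardRep_smul_iff {c : K} (hc : c ≠ 0) :
    (∃ q, IsStandardRep σ g P (c • f) q) ↔ ∃ q, IsStandardRep σ g P f q :=
  ⟨fun ⟨q, h⟩ => ⟨c⁻¹ • q, by simpa [smul_smul, hc] using h.smul (inv_ne_zero hc)⟩,
    fun ⟨q, h⟩ => ⟨c • q, h.smul hc⟩⟩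

theorem eq_zero_or_exists_isStandardRep_iff :
    (f = 0 ∨ ∃ q : ι → MvPolynomial ν K, f = ∑ k, q k * g k ∧ (∀ k, ¬ P k → q k = 0) ∧
        ∀ k, q k * g k ≠ 0 → σ.degree (q k * g k) ≼[σ] σ.degree f) ↔
      ∃ q, IsStandardRep σ g P f q := by
  refine ⟨?_, fun ⟨q, h⟩ => Or.inr ⟨q, h.1, h.2.1, fun k _ => h.2.2 k⟩⟩
  rintro (rfl | ⟨q, hfq, hP, hdeg⟩)
  · exact ⟨0, by simp, fun _ _ => rfl, fun k => by simp⟩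
  · refine ⟨q, hfq, hP, fun k => ?_⟩
    by_cases hk : q k * g k = 0
    · simp [hk]
    · exact hdeg k hk

variable (w σ g d D) in
def IsTruncatedGroebnerBasis : Prop :=
  ∀ v ∈ Ideal.span (Set.range g), v ≠ 0 → ∀ e, IsWeightedHomogeneous w v e → e ≤ D →
    ∃ k, d k ≤ D ∧ σ.degree (g k) ≤ σ.degree v

variable (w σ g d D) in
def SPolynomialsReduceToZero [LT ι] : Prop :=
  ∀ i j : ι, i < j → weight w (σ.degree (g i) ⊔ σ.degree (g j)) ≤ D →
    ∃ q, IsStandardRep σ g (fun k => d k ≤ D) (σ.sPolynomial (g i) (g j)) q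

theorem IsTruncatedGroebnerBasis.exists_isStandardRep (hb : IsTruncatedGroebnerBasis w σ g d D)
    (hg0 : ∀ k, g k ≠ 0) (hgh : ∀ k, IsWeightedHomogeneous w (g k) (d k))
    {u : MvPolynomial ν K} (hu : u ∈ Ideal.span (Set.range g)) {e : M}
    (hue : IsWeightedHomogeneous w u e) (heD : e ≤ D) :
    ∃ q, IsStandardRep σ g (fun k => d k ≤ D) u q := by
  classical
  obtain ⟨Q, r, hQr, hQ, hr⟩ := σ.div (b := fun k : {k // d k ≤ D} => g k)
    (fun k => isUnit_leadingCoeff.2 (hg0 k)) u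
  let q : ι → MvPolynomial ν K := fun k => if h : d k ≤ D then Q ⟨k, h⟩ else 0
  have hr_eq : r = u - ∑ k, q k * g k := by
    have hQq : Finsupp.linearCombination _ (fun k : {k // d k ≤ D} => g k) Q =
        ∑ k, q k * g k := by
      rw [Finsupp.linearCombination_apply, Finsupp.sum_fintype _ _ (by simp)]
      refine Fintype.sum_of_injective Subtype.val Subtype.val_injective _ _ (fun k hk => ?_)
        fun k => by simp [q, k.2]
      simp [q, show ¬d k ≤ D from fun h => hk ⟨⟨k, h⟩, rfl⟩]
    rw [hQr, hQq, add_sub_cancel_left]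
  let q' : ι → MvPolynomial ν K := fun k => weightedHomogeneousComponent w (e - d k) (q k)
  have hr' : weightedHomogeneousComponent w e r = u - ∑ k, q' k * g k := by
    rw [hr_eq, map_sub, hue.weightedHomogeneousComponent_same,
      weightedHomogeneousComponent_sum_mul hgh]
  have hr'0 : weightedHomogeneousComponent w e r = 0 := by
    by_contra hne
    have hmemI : weightedHomogeneousComponent w e r ∈ Ideal.span (Set.range g) :=
      hr' ▸ sub_mem hu (Ideal.mem_span_range_iff_exists_fun.2 ⟨_, rfl⟩)
    obtain ⟨k, hkD, hk⟩ := hb _ hmemI hne e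
      (weightedHomogeneousComponent_isWeightedHomogeneous _ _) heD
    have hmem := σ.degree_mem_support hne
    rw [support_weightedHomogeneousComponent] at hmem
    exact hr _ (Finset.mem_filter.1 hmem).1 ⟨k, hkD⟩ hk
  refine ⟨q', by rw [← sub_eq_zero, ← hr', hr'0], fun k hk => by simp [q', q, hk], fun k => ?_⟩
  show σ.degree (q' k * g k) ≼[σ] σ.degree u
  refine le_trans (degree_mul_le_degree_mul_of_support_subset
    (support_weightedHomogeneousComponent_subset _ (q k)) _) ?_
  by_cases hk : d k ≤ D
  · simpa [q, hk, mul_comm] using hQ ⟨k, hk⟩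
  · simp [q, hk]

theorem IsTruncatedGroebnerBasis.sPolynomialsReduceToZero [LT ι]
    (hb : IsTruncatedGroebnerBasis w σ g d D) (hg0 : ∀ k, g k ≠ 0)
    (hgh : ∀ k, IsWeightedHomogeneous w (g k) (d k)) : SPolynomialsReduceToZero w σ g d D :=
  fun i j _ hLD => hb.exists_isStandardRep hg0 hgh
    (sPolynomial_mem_ideal (Ideal.subset_span ⟨i, rfl⟩) (Ideal.subset_span ⟨j, rfl⟩))
    (isWeightedHomogeneous_sPolynomial (hgh i) (hgh j) (hg0 i) (hg0 j)) hLD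

variable [LinearOrder ι]

variable (w g d) in
def IsHomogeneousRep (e : M) (v : MvPolynomial ν K) (q : ι → MvPolynomial ν K) : Prop :=
  v = ∑ k, q k * g k ∧ ∀ k, IsWeightedHomogeneous w (q k) (e - d k)

theorem SPolynomialsReduceToZero.exists_homogeneous_rep_sPolynomial
    (hc : SPolynomialsReduceToZero w σ g d D) (hg0 : ∀ k, g k ≠ 0)
    (hgh : ∀ k, IsWeightedHomogeneous w (g k) (d k)) {i j : ι} (hij : i < j)
    (hLD : weight w (σ.degree (g i) ⊔ σ.degree (g j)) ≤ D) :
    ∃ p : ι → MvPolynomial ν K, σ.sPolynomial (g i) (g j) = ∑ k, p k * g k ∧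
      (∀ k, IsWeightedHomogeneous w (p k) (weight w (σ.degree (g i) ⊔ σ.degree (g j)) - d k)) ∧
      ∀ k, p k * g k ≠ 0 → σ.degree (p k * g k) ≺[σ] σ.degree (g i) ⊔ σ.degree (g j) := by
  by_cases hS : σ.sPolynomial (g i) (g j) = 0
  · exact ⟨0, by simp [hS], fun k => isWeightedHomogeneous_zero _ _ _, fun k hk => by simp at hk⟩
  obtain ⟨q, hq, -, hqdeg⟩ := hc i j hij hLD
  have hSh := isWeightedHomogeneous_sPolynomial (σ := σ) (hgh i) (hgh j) (hg0 i) (hg0 j)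
  refine ⟨_, hSh.eq_sum_weightedHomogeneousComponent_mul hgh hq,
    fun k => weightedHomogeneousComponent_isWeightedHomogeneous _ _, fun k _ => ?_⟩
  refine lt_of_le_of_lt ?_ (degree_sPolynomial_lt_sup_degree hS)
  exact (degree_mul_le_degree_mul_of_support_subset
    (support_weightedHomogeneousComponent_subset _ (q k)) _).trans (hqdeg k)

variable [IsOrderedAddMonoid M]

namespace SPolynomialsReduceToZero

theorem exists_syzygy (hw : ∀ x, 0 ≤ w x) (hc : SPolynomialsReduceToZero w σ g d D)
    (hg0 : ∀ k, g k ≠ 0) (hgh : ∀ k, IsWeightedHomogeneous w (g k) (d k)) {i j : ι} (hij : i < j)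
    {μ : ν →₀ ℕ} (hμ : σ.degree (g i) ⊔ σ.degree (g j) ≤ μ) (hμD : weight w μ ≤ D) (a : K) :
    ∃ z : ι → MvPolynomial ν K, ∑ k, z k * g k = 0 ∧
      (∀ k, IsWeightedHomogeneous w (z k) (weight w μ - d k)) ∧
      (∀ k, σ.degree (z k * g k) ≼[σ] μ) ∧
      (z i * g i).coeff μ = a ∧ ∀ k, k ≠ i → k ≠ j → (z k * g k).coeff μ = 0 := by
  set L := σ.degree (g i) ⊔ σ.degree (g j)
  obtain ⟨p, hpS, hph, hpdeg⟩ := hc.exists_homogeneous_rep_sPolynomial hg0 hgh hij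
    ((Finsupp.weight_mono_of_nonneg hw hμ).trans hμD)
  have hpL : ∀ k, σ.degree (p k * g k) ≼[σ] L ∧ (p k * g k).coeff L = 0 := by
    intro k
    by_cases hk : p k * g k = 0
    · simp [hk]
    · exact ⟨(hpdeg k hk).le, coeff_eq_zero_of_lt (hpdeg k hk)⟩
  obtain ⟨c, B, hS, hBi, hBk, hB⟩ :=
    exists_monomial_mul_sPolynomial_eq_sum (hg0 i) (hg0 j) hij.ne hμ a
  -- `∑ z_k g_k = c x^{μ-L} (S_ij - ∑ p_k g_k)`
  let z : ι → MvPolynomial ν K := fun k =>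
    monomial (μ - σ.degree (g k)) (B k) - monomial (μ - L) c * p k
  have hzg : ∀ k, z k * g k =
      monomial (μ - σ.degree (g k)) (B k) * g k - monomial (μ - L) c * (p k * g k) := fun k => by
    simp only [z]; ring
  refine ⟨z, ?_, fun k => ?_, fun k => ?_, ?_, fun k hki hkj => ?_⟩
  · rw [Finset.sum_congr rfl fun k _ => hzg k, Finset.sum_sub_distrib, ← Finset.mul_sum, ← hpS,
      ← hS, sub_self]
  · refine IsWeightedHomogeneous.sub ?_ ?_
    · by_cases hBk : B k = 0
      · simpa [hBk] using isWeightedHomogeneous_zero _ _ _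
      · exact isWeightedHomogeneous_monomial_tsub_degree (hgh k) (hg0 k) (hB k hBk) _
    · have h := (isWeightedHomogeneous_monomial w (μ - L) c rfl).mul (hph k)
      rwa [← add_sub_assoc, ← map_add, tsub_add_cancel_of_le hμ] at h
  · rw [hzg]
    refine degree_sub_le.trans (max_le ?_ (degree_monomial_mul_le_of_le (hpL k).1 hμ c))
    by_cases hBk : B k = 0
    · simp [hBk]
    · rw [degree_monomial_mul hBk (hg0 k), tsub_add_cancel_of_le (hB k hBk)]
  · rw [hzg, coeff_sub, coeff_monomial_mul_of_le hμ, (hpL i).2, mul_zero, sub_zero,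
      coeff_monomial_mul_of_le (le_sup_left.trans hμ)]
    exact hBi
  · rw [hzg, coeff_sub, coeff_monomial_mul_of_le hμ, (hpL k).2]
    simp [hBk k hki hkj]

theorem exists_isHomogeneousRep_ncard_lt (hw : ∀ x, 0 ≤ w x)
    (hc : SPolynomialsReduceToZero w σ g d D) (hg0 : ∀ k, g k ≠ 0)
    (hgh : ∀ k, IsWeightedHomogeneous w (g k) (d k)) {e : M} (heD : e ≤ D)
    {v : MvPolynomial ν K} {q : ι → MvPolynomial ν K} (hq : IsHomogeneousRep w g d e v q)
    {μ : ν →₀ ℕ} (hqμ : ∀ k, σ.degree (q k * g k) ≼[σ] μ) (hvμ : σ.degree v ≺[σ] μ)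
    {k₁ : ι} (hk₁ : (q k₁ * g k₁).coeff μ ≠ 0) :
    ∃ q', IsHomogeneousRep w g d e v q' ∧ (∀ k, σ.degree (q' k * g k) ≼[σ] μ) ∧
      {k | (q' k * g k).coeff μ ≠ 0}.ncard < {k | (q k * g k).coeff μ ≠ 0}.ncard := by
  obtain ⟨hvq, hqh⟩ := hq
  have hsum : ∑ k, (q k * g k).coeff μ = 0 := by
    rw [← coeff_sum, ← hvq, coeff_eq_zero_of_lt hvμ]
  obtain ⟨k₂, hk₂₁, hk₂⟩ : ∃ k₂, k₂ ≠ k₁ ∧ (q k₂ * g k₂).coeff μ ≠ 0 := by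
    by_contra! h
    rw [Finset.sum_eq_single k₁ (fun k _ hk => h k hk) (by simp)] at hsum
    exact hk₁ hsum
  suffices H : ∀ i j, i < j → (q i * g i).coeff μ ≠ 0 → (q j * g j).coeff μ ≠ 0 →
      ∃ q', IsHomogeneousRep w g d e v q' ∧ (∀ k, σ.degree (q' k * g k) ≼[σ] μ) ∧
        {k | (q' k * g k).coeff μ ≠ 0}.ncard < {k | (q k * g k).coeff μ ≠ 0}.ncard by
    rcases lt_or_gt_of_ne hk₂₁ with h | h
    exacts [H k₂ k₁ h hk₂ hk₁, H k₁ k₂ h hk₁ hk₂]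
  intro i j hij hi hj
  obtain ⟨hqi, hti⟩ := ne_zero_and_degree_le_of_coeff_mul_ne_zero (hg0 i) hi (hqμ i)
  have hμe : weight w μ = e := by
    simpa using ((hqh i).mul (hgh i)) hi
  obtain ⟨z, hz, hzh, hzμ, hzi, hzk⟩ := hc.exists_syzygy hw hg0 hgh hij
    (sup_le hti (ne_zero_and_degree_le_of_coeff_mul_ne_zero (hg0 j) hj (hqμ j)).2) (hμe ▸ heD)
    (-(q i * g i).coeff μ)
  refine ⟨q + z, ⟨?_, fun k => (hqh k).add (hμe ▸ hzh k)⟩, fun k => ?_, ?_⟩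
  · simp [add_mul, Finset.sum_add_distrib, hz, hvq]
  · rw [Pi.add_apply, add_mul]
    exact degree_add_le.trans (max_le (hqμ k) (hzμ k))
  · refine (Set.ncard_le_ncard (t := {k | (q k * g k).coeff μ ≠ 0} \ {i}) ?_).trans_lt
      (Set.ncard_sdiff_singleton_lt_of_mem hi)
    intro k hk
    simp only [Set.mem_ofPred_eq, Pi.add_apply, add_mul, coeff_add] at hk
    have hki : k ≠ i := by rintro rfl; simp [hzi] at hk
    refine ⟨?_, hki⟩
    by_cases hkj : k = j
    · exact hkj ▸ hj
    · simpa [hzk k hki hkj] using hk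

theorem exists_isHomogeneousRep_degree_le (hw : ∀ x, 0 ≤ w x)
    (hc : SPolynomialsReduceToZero w σ g d D) (hg0 : ∀ k, g k ≠ 0)
    (hgh : ∀ k, IsWeightedHomogeneous w (g k) (d k)) {v : MvPolynomial ν K}
    (hv : v ∈ Ideal.span (Set.range g)) {e : M} (hve : IsWeightedHomogeneous w v e)
    (heD : e ≤ D) :
    ∃ q, IsHomogeneousRep w g d e v q ∧ ∀ k, σ.degree (q k * g k) ≼[σ] σ.degree v := by
  let top : (ι → MvPolynomial ν K) → σ.syn := fun q =>
    Finset.univ.sup fun k => σ.toSyn (σ.degree (q k * g k))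
  let size : (ι → MvPolynomial ν K) → σ.syn ×ₗ ℕ := fun q =>
    toLex (top q, {k | (q k * g k).coeff (σ.toSyn.symm (top q)) ≠ 0}.ncard)
  have hreps : {q | IsHomogeneousRep w g d e v q}.Nonempty := by
    obtain ⟨q, hq⟩ := Ideal.mem_span_range_iff_exists_fun.1 hv
    exact ⟨_, hve.eq_sum_weightedHomogeneousComponent_mul hgh hq.symm,
      fun k => weightedHomogeneousComponent_isWeightedHomogeneous _ _⟩
  set q := Function.argminOn size _ hreps
  have hq : IsHomogeneousRep w g d e v q := Function.argminOn_mem size _ hreps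
  suffices htop : top q ≤ σ.toSyn (σ.degree v) from
    ⟨q, hq, fun k => (Finset.le_sup (f := fun k => σ.toSyn (σ.degree (q k * g k)))
      (Finset.mem_univ k)).trans htop⟩
  by_contra! hvtop
  set μ := σ.toSyn.symm (top q)
  have hμ : σ.toSyn μ = top q := σ.toSyn.apply_symm_apply _
  have : Nonempty ι := by
    rw [← not_isEmpty_iff]
    intro
    exact (σ.zero_le _).not_gt (by simpa [top] using hvtop)
  obtain ⟨k₁, -, hk₁⟩ := Finset.exists_mem_eq_sup Finset.univ Finset.univ_nonempty
    fun k => σ.toSyn (σ.degree (q k * g k))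
  have hk₁μ : σ.degree (q k₁ * g k₁) = μ := σ.toSyn.injective (hμ.trans hk₁).symm
  have hk₁0 : q k₁ * g k₁ ≠ 0 := by
    intro h
    rw [h, degree_zero, ← σ.toSyn.injective.eq_iff, hμ, map_zero] at hk₁μ
    exact (σ.zero_le _).not_gt (hk₁μ ▸ hvtop)
  obtain ⟨q', hq', hq'μ, hcard⟩ := hc.exists_isHomogeneousRep_ncard_lt hw hg0 hgh heD hq
    (fun k => hμ ▸ Finset.le_sup (f := fun k => σ.toSyn (σ.degree (q k * g k)))
      (Finset.mem_univ k)) (hμ ▸ hvtop)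
    (hk₁μ ▸ σ.coeff_degree_ne_zero_iff.2 hk₁0)
  refine Function.not_lt_argminOn size {q | IsHomogeneousRep w g d e v q} hq'
    (Prod.Lex.lt_iff.2 ?_)
  rcases (Finset.sup_le fun k _ => hμ ▸ hq'μ k : top q' ≤ top q).lt_or_eq with h | h
  · exact Or.inl h
  · refine Or.inr ⟨h, ?_⟩
    change {k | (q' k * g k).coeff (σ.toSyn.symm (top q')) ≠ 0}.ncard <
      {k | (q k * g k).coeff μ ≠ 0}.ncard
    rwa [show top q' = top q from h]

theorem isTruncatedGroebnerBasis (hw : ∀ x, 0 ≤ w x) (hc : SPolynomialsReduceToZero w σ g d D)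
    (hg0 : ∀ k, g k ≠ 0) (hgh : ∀ k, IsWeightedHomogeneous w (g k) (d k)) :
    IsTruncatedGroebnerBasis w σ g d D := by
  intro v hv hv0 e hve heD
  obtain ⟨q, ⟨hvq, hqh⟩, hqdeg⟩ := hc.exists_isHomogeneousRep_degree_le hw hg0 hgh hv hve heD
  have hlead : ∑ k, (q k * g k).coeff (σ.degree v) ≠ 0 := by
    rw [← coeff_sum, ← hvq]
    exact σ.coeff_degree_ne_zero_iff.2 hv0
  obtain ⟨k, -, hk⟩ := Finset.exists_ne_zero_of_sum_ne_zero hlead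
  obtain ⟨hqk, hdeg⟩ := ne_zero_and_degree_le_of_coeff_mul_ne_zero (hg0 k) hk (hqdeg k)
  exact ⟨k, (sub_nonneg.1 ((hqh k).nonneg hw hqk)).trans heD, hdeg⟩

end SPolynomialsReduceToZero

theorem isTruncatedGroebnerBasis_iff_sPolynomialsReduceToZero (hw : ∀ x, 0 ≤ w x)
    (hg0 : ∀ k, g k ≠ 0) (hgh : ∀ k, IsWeightedHomogeneous w (g k) (d k)) :
    IsTruncatedGroebnerBasis w σ g d D ↔ SPolynomialsReduceToZero w σ g d D :=
  ⟨fun hb => hb.sPolynomialsReduceToZero hg0 hgh, fun hc => hc.isTruncatedGroebnerBasis hw hg0 hgh⟩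

end TruncatedGroebner

section Matrix

variable {m n : ℕ}

def columnWeights (W : Matrix (Fin m) (Fin n) ℤ) (j : Fin n) : Lex (Fin m → ℤ) :=
  toLex fun i => W i j

theorem toLex_wdeg (W : Matrix (Fin m) (Fin n) ℤ) (α : Fin n →₀ ℕ) :
    toLex (wdeg W α) = weight (columnWeights W) α := by
  rw [Finsupp.weight_eq_sum]
  change wdeg W α = ∑ j, α j • fun i => W i j
  funext i
  simp [wdeg, Finset.sum_apply, mul_comm]

theorem isWHomogeneous_iff {K : Type*} [CommSemiring K] {W : Matrix (Fin m) (Fin n) ℤ}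
    {p : MvPolynomial (Fin n) K} {e : Fin m → ℤ} :
    IsWHomogeneous W p e ↔ IsWeightedHomogeneous (columnWeights W) p (toLex e) := by
  simp only [IsWHomogeneous, IsWeightedHomogeneous, mem_support_iff, ← toLex_wdeg, toLex_inj]

theorem PositiveGrading.columnWeights_nonneg {W : Matrix (Fin m) (Fin n) ℤ}
    (hW : PositiveGrading W) (j : Fin n) : 0 ≤ columnWeights W j := by
  obtain ⟨i, hi, hi'⟩ := hW.2.2 j
  exact le_of_lt ⟨i, fun i' hi'' => (hi' i' hi'').symm, hi⟩

theorem mdeg_eq_degree {K : Type*} [CommSemiring K] (σ : MonomialOrder (Fin n))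
    (f : MvPolynomial (Fin n) K) : mdeg σ f = σ.degree f :=
  rfl

theorem sPoly_eq_smul_sPolynomial {K : Type*} [Field K] (σ : MonomialOrder (Fin n))
    {f g : MvPolynomial (Fin n) K} (hf : f ≠ 0) (hg : g ≠ 0) :
    sPoly σ f g = (σ.leadingCoeff f * σ.leadingCoeff g)⁻¹ • σ.sPolynomial f g := by
  have hf' := σ.leadingCoeff_ne_zero_iff.2 hf
  have hg' := σ.leadingCoeff_ne_zero_iff.2 hg
  rw [sPoly, mdeg_eq_degree, mdeg_eq_degree, ← leadingCoeff.eq_1, ← leadingCoeff.eq_1,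
    sPolynomial_def, smul_sub, smul_eq_C_mul, smul_eq_C_mul, ← mul_assoc, ← mul_assoc,
    C_mul_monomial, C_mul_monomial]
  congr 3 <;> field_simp

end Matrix

/-- Characterization of truncated Gröbner bases (Buchberger criterion for truncations):
for `W`-homogeneous generators `g_1,…,g_s` of an ideal `I` and a degree `D ∈ ℤ^m`,
condition (b) — every nonzero `W`-homogeneous `v ∈ I` of `W`-degree `≤_Lex D` has its
leading term divisible by the leading term of some `g_k` with `d_k ≤_Lex D` — is
equivalent to condition (c) — every S-polynomial `S_ij` with
`deg_W(x^(L_ij)) ≤_Lex D` is zero or has a representation `S_ij = ∑ q_k g_k` with `q_k = 0`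
unless `d_k ≤_Lex D` and `deg_σ(q_k g_k) ≤_σ deg_σ(S_ij)` whenever `q_k g_k ≠ 0`. -/
theorem stmt_7 {K : Type*} [Field K] {m n s : ℕ} (W : Matrix (Fin m) (Fin n) ℤ)
    (hW : PositiveGrading W) (σ : MonomialOrder (Fin n))
    (g : Fin s → MvPolynomial (Fin n) K) (hg0 : ∀ k, g k ≠ 0)
    (d : Fin s → Fin m → ℤ) (hgh : ∀ k, IsWHomogeneous W (g k) (d k))
    (D : Fin m → ℤ) :
    (∀ v ∈ Ideal.span (Set.range g), v ≠ 0 → ∀ e : Fin m → ℤ, IsWHomogeneous W v e →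
        toLex e ≤ toLex D →
        ∃ k, toLex (d k) ≤ toLex D ∧ mdeg σ (g k) ≤ mdeg σ v) ↔
      (∀ i j : Fin s, i < j →
        toLex (wdeg W (mdeg σ (g i) ⊔ mdeg σ (g j))) ≤ toLex D →
        (sPoly σ (g i) (g j) = 0 ∨
          ∃ q : Fin s → MvPolynomial (Fin n) K,
            sPoly σ (g i) (g j) = ∑ k, q k * g k ∧
            (∀ k, ¬ toLex (d k) ≤ toLex D → q k = 0) ∧
            (∀ k, q k * g k ≠ 0 →
              σ.toSyn (mdeg σ (q k * g k)) ≤ σ.toSyn (mdeg σ (sPoly σ (g i) (g j)))))) := by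
  have hgh' k : IsWeightedHomogeneous (columnWeights W) (g k) (toLex (d k)) :=
    isWHomogeneous_iff.1 (hgh k)
  refine Iff.trans ?_ ((isTruncatedGroebnerBasis_iff_sPolynomialsReduceToZero
    hW.columnWeights_nonneg hg0 hgh' (σ := σ) (D := toLex D)).trans ?_)
  · simp only [IsTruncatedGroebnerBasis, isWHomogeneous_iff]
    rfl
  · refine forall₃_congr fun i j _ => imp_congr (by rw [toLex_wdeg]; rfl) ?_
    rw [sPoly_eq_smul_sPolynomial σ (hg0 i) (hg0 j), ← exists_isStandardRep_smul_iff
      (inv_ne_zero (mul_ne_zero (σ.leadingCoeff_ne_zero_iff.2 (hg0 i))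
        (σ.leadingCoeff_ne_zero_iff.2 (hg0 j))))]
    exact eq_zero_or_exists_isStandardRep_iff.symm
end

section
/- Minimality criterion for ordered homogeneous generators: let the grading given by W be positive, fix shifts δ_1,…,δ_r ∈ ℤ^m, and let g_1,…,g_s ∈ P^r be homogeneous vectors, g_k of degree d_k ∈ ℤ^m, with degrees ordered increasingly: d_1 ≤_Lex d_2 ≤_Lex ⋯ ≤_Lex d_s. Let M = Span_P(g_1,…,g_s). Then {g_1,…,g_s} is a minimal system of generators of M — i.e. g_k ∉ Span_P({g_j : j ≠ k}) for every k — if and only if g_k ∉ Span_P(g_1,…,g_{k−1}) for every k = 1,…,s. -/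
/-!
Project a relation `g_k = ∑_{j ≠ k} f_j g_j` onto degree `d_k`: this gives one with each `q_j`
homogeneous of degree `d_k - d_j`. If the largest `j` with `q_j ≠ 0` is below `k`, then `g_k`
lies in the span of its predecessors. Otherwise this `j` exceeds `k`, so `d_k - d_j ≤ 0`; in a
positive grading `q_j` is then a nonzero constant, and solving for `g_j` puts it in the span of
its predecessors.
-/

open MvPolynomial

theorem Finsupp.weight_pos {σ M : Type*} [AddCommMonoid M] [PartialOrder M]
    [IsOrderedCancelAddMonoid M] {w : σ → M} (hw : ∀ i, 0 < w i) {α : σ →₀ ℕ} (hα : α ≠ 0) :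
    0 < Finsupp.weight w α := by
  obtain ⟨i, hi⟩ := Finsupp.support_nonempty_iff.2 hα
  rw [Finsupp.weight_apply, Finsupp.sum]
  exact Finset.sum_pos' (fun j _ => nsmul_nonneg (hw j).le _)
    ⟨i, hi, nsmul_pos (hw i) (Finsupp.mem_support_iff.1 hi)⟩

namespace MvPolynomial

variable {R σ M : Type*}

theorem weightedHomogeneousComponent_add_mul_of_isWeightedHomogeneous [CommSemiring R]
    [AddCancelCommMonoid M] [DecidableEq M] {w : σ → M} {q : MvPolynomial σ R} {j : M}
    (hq : q.IsWeightedHomogeneous w j) (p : MvPolynomial σ R) (i : M) :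
    weightedHomogeneousComponent w (i + j) (p * q) = weightedHomogeneousComponent w i p * q := by
  let := weightedGradedAlgebra R w
  rw [← decompose'_apply R w, ← decompose'_apply R w]
  exact DirectSum.coe_decompose_mul_add_of_right_mem _ hq

theorem IsWeightedHomogeneous.eq_C_of_nonpos [CommSemiring R] [AddCommMonoid M] [PartialOrder M]
    [IsOrderedCancelAddMonoid M] {w : σ → M} (hw : ∀ i, 0 < w i) {p : MvPolynomial σ R} {c : M}
    (hp : p.IsWeightedHomogeneous w c) (hc : c ≤ 0) : p = C (coeff 0 p) := by
  classical
  ext α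
  rw [coeff_C]
  split_ifs with hα
  · rw [hα]
  · by_contra hne
    exact (Finsupp.weight_pos hw (Ne.symm hα)).not_ge (hp hne ▸ hc)

theorem IsWeightedHomogeneous.isUnit_of_nonpos {K : Type*} [Field K] [AddCommMonoid M]
    [PartialOrder M] [IsOrderedCancelAddMonoid M] {w : σ → M} (hw : ∀ i, 0 < w i)
    {p : MvPolynomial σ K} {c : M} (hp : p.IsWeightedHomogeneous w c) (hc : c ≤ 0) (hp0 : p ≠ 0) :
    IsUnit p := by
  rw [hp.eq_C_of_nonpos hw hc] at hp0 ⊢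
  exact (Ne.isUnit fun h => hp0 (by rw [h, C_0])).map C

end MvPolynomial

section HomogeneousVectors

variable {R K σ M ι κ : Type*}

open Submodule in
theorem exists_isWeightedHomogeneous_coeffs_of_mem_span [CommRing R] [AddCommGroup M]
    {w : σ → M} {δ : κ → M} {g : ι → κ → MvPolynomial σ R} {d : ι → M}
    (hg : ∀ j i, (g j i).IsWeightedHomogeneous w (d j - δ i))
    {v : κ → MvPolynomial σ R} {e : M} (hv : ∀ i, (v i).IsWeightedHomogeneous w (e - δ i))
    {S : Set ι} (hmem : v ∈ span (MvPolynomial σ R) (g '' S)) :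
    ∃ (T : Finset ι) (q : ι → MvPolynomial σ R), ↑T ⊆ S ∧ (∀ j ∈ T, q j ≠ 0) ∧
      (∀ j, (q j).IsWeightedHomogeneous w (e - d j)) ∧ v = ∑ j ∈ T, q j • g j := by
  classical
  obtain ⟨l, hlS, hl⟩ := (Finsupp.mem_span_image_iff_linearCombination _).1 hmem
  set q : ι → MvPolynomial σ R := fun j => weightedHomogeneousComponent w (e - d j) (l j)
  have hvq : v = ∑ j ∈ l.support, q j • g j := by
    funext i
    calc v i = weightedHomogeneousComponent w (e - δ i) (v i) :=
          (hv i).weightedHomogeneousComponent_same.symm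
      _ = ∑ j ∈ l.support, weightedHomogeneousComponent w (e - δ i) (l j * g j i) := by
          rw [← hl, Finsupp.linearCombination_apply, Finsupp.sum, Finset.sum_apply, map_sum]
          rfl
      _ = ∑ j ∈ l.support, q j * g j i := by
          refine Finset.sum_congr rfl fun j _ => ?_
          rw [← sub_add_sub_cancel e (d j) (δ i),
            weightedHomogeneousComponent_add_mul_of_isWeightedHomogeneous (hg j i)]
      _ = (∑ j ∈ l.support, q j • g j) i := by
          rw [Finset.sum_apply]
          rfl
  refine ⟨l.support.filter (q · ≠ 0), q, fun j hj => hlS (Finset.mem_filter.1 hj).1,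
    fun j hj => (Finset.mem_filter.1 hj).2,
    fun j => weightedHomogeneousComponent_isWeightedHomogeneous _ _, ?_⟩
  rw [Finset.sum_filter_of_ne (p := (q · ≠ 0)) fun j _ h hq => h (by rw [hq, zero_smul]), hvq]

open Submodule in
theorem notMem_span_image_ne_of_forall_notMem_span_image_lt [Field K] [AddCommGroup M]
    [LinearOrder M] [IsOrderedAddMonoid M] {w : σ → M} (hw : ∀ i, 0 < w i) {δ : κ → M}
    [LinearOrder ι] {g : ι → κ → MvPolynomial σ K} {d : ι → M}
    (hg : ∀ j i, (g j i).IsWeightedHomogeneous w (d j - δ i)) (hd : Monotone d)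
    (H : ∀ k, g k ∉ span (MvPolynomial σ K) (g '' {j | j < k})) (k : ι) :
    g k ∉ span (MvPolynomial σ K) (g '' {j | j ≠ k}) := by
  classical
  intro hk
  obtain ⟨T, q, hTS, hq0, hq, hgk⟩ := exists_isWeightedHomogeneous_coeffs_of_mem_span hg (hg k) hk
  rcases T.eq_empty_or_nonempty with hT | hT
  · exact H k (by rw [hgk, hT, Finset.sum_empty]; exact zero_mem _)
  set j₀ := T.max' hT
  have hj₀ : j₀ ∈ T := T.max'_mem hT
  rcases lt_or_gt_of_ne (hTS hj₀ : j₀ ≠ k) with hlt | hgt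
  · refine H k (hgk ▸ sum_smul_mem _ _ fun j hj => subset_span ⟨j, ?_, rfl⟩)
    exact (T.le_max' j hj).trans_lt hlt
  · have hunit : IsUnit (q j₀) :=
      (hq j₀).isUnit_of_nonpos hw (sub_nonpos.2 (hd hgt.le)) (hq0 j₀ hj₀)
    have hsolve : q j₀ • g j₀ = g k - ∑ j ∈ T.erase j₀, q j • g j := by
      rw [hgk, ← Finset.add_sum_erase _ _ hj₀, add_sub_cancel_right]
    apply H j₀
    rw [← smul_mem_iff_of_isUnit _ hunit, hsolve]
    exact sub_mem (subset_span ⟨k, hgt, rfl⟩) (sum_smul_mem _ _ fun j hj =>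
      subset_span ⟨j, T.lt_max'_of_mem_erase_max' hT hj, rfl⟩)

end HomogeneousVectors

theorem weight_toLex_columns {m n : ℕ} (W : Matrix (Fin m) (Fin n) ℤ) (α : Fin n →₀ ℕ) :
    Finsupp.weight (fun j => toLex fun i => W i j) α = toLex (wdeg W α) := by
  rw [Finsupp.weight_apply, Finsupp.sum_fintype α (fun j c => c • toLex fun i => W i j)
    fun _ => zero_smul _ _]
  funext i
  exact (Finset.sum_apply i Finset.univ fun j => α j • fun i => W i j).trans
    (Finset.sum_congr rfl fun j _ => nsmul_eq_mul _ _)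

theorem PositiveGrading.toLex_column_pos {m n : ℕ} {W : Matrix (Fin m) (Fin n) ℤ}
    (hW : PositiveGrading W) (j : Fin n) : 0 < toLex fun i => W i j :=
  let ⟨i, hpos, hzero⟩ := hW.2.2 j
  ⟨i, fun i' hi' => (hzero i' hi').symm, hpos⟩

theorem IsWHomogeneousVec.isWeightedHomogeneous {K : Type*} [CommSemiring K] {m n r : ℕ}
    {W : Matrix (Fin m) (Fin n) ℤ} {δ : Fin r → Fin m → ℤ} {v : Fin r → MvPolynomial (Fin n) K}
    {d : Fin m → ℤ} (h : IsWHomogeneousVec W δ v d) (i : Fin r) :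
    (v i).IsWeightedHomogeneous (fun j => toLex fun i => W i j) (toLex d - toLex (δ i)) :=
    fun α hα => by
  rw [weight_toLex_columns, h i α (mem_support_iff.2 hα)]
  rfl

/-- Minimality criterion for ordered homogeneous generators: for homogeneous vectors
`g_1,…,g_s ∈ P^r` with `Lex`-increasing degrees, `{g_1,…,g_s}` is a minimal system of
generators of `M = Span_P(g_1,…,g_s)` — no `g_k` lies in the span of the others — if and
only if `g_k ∉ Span_P(g_1,…,g_(k−1))` for every `k`. -/
theorem stmt_10 {K : Type*} [Field K] {m n r s : ℕ} (W : Matrix (Fin m) (Fin n) ℤ)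
    (hW : PositiveGrading W) (δ : Fin r → Fin m → ℤ)
    (g : Fin s → (Fin r → MvPolynomial (Fin n) K)) (d : Fin s → Fin m → ℤ)
    (hgh : ∀ k, IsWHomogeneousVec W δ (g k) (d k))
    (hord : ∀ j k : Fin s, j ≤ k → toLex (d j) ≤ toLex (d k)) :
    (∀ k : Fin s, g k ∉ Submodule.span (MvPolynomial (Fin n) K) (g '' {j | j ≠ k})) ↔
      (∀ k : Fin s, g k ∉ Submodule.span (MvPolynomial (Fin n) K) (g '' {j | j < k})) := by
  refine ⟨fun H k hk => H k (Submodule.span_mono (Set.image_mono fun j => ne_of_lt) hk), ?_⟩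
  exact notMem_span_image_ne_of_forall_notMem_span_image_lt hW.toLex_column_pos
    (fun k => IsWHomogeneousVec.isWeightedHomogeneous (hgh k)) fun _ _ => hord _ _
end
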